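/- In the planar Kepler problem with ℓ ≠ 0 and E ≠ 0, define I' = (k/(-E))·(r/|r|) and let I be the reflection of I' in the line through r in direction p (the tangent line at the point r). Then I = A/E, independently of the point on the orbit; in particular I is a constant of the motion. -/

import Mathlib

/-!
The only input is the energy relation `‖p‖² = 2 (E + k/‖r‖)`. Reflecting `I' = c r`,
`c = -k/(E ‖r‖)`, in the tangent line gives `(2 - c) r + (2 (c - 1) ⟪r, p⟫ / ‖p‖²) p`, and the
energy relation turns both coefficients into those of `E⁻¹ A`, namely
`(‖p‖² - k/‖r‖)/E` and `-⟪r, p⟫/E`.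
-/

/-- Reflection of the point `Q` in the affine line through `x` with direction `u`. -/
noncomputable def reflectInLine (x u Q : EuclideanSpace ℝ (Fin 2)) :
    EuclideanSpace ℝ (Fin 2) :=
  x + (2 * ((inner ℝ (Q - x) u : ℝ) / ‖u‖ ^ 2)) • u - (Q - x)

theorem reflectInLine_smul_self (x u : EuclideanSpace ℝ (Fin 2)) (c : ℝ) :
    reflectInLine x u (c • x) =
      (2 - c) • x + (2 * (c - 1) * (inner ℝ x u : ℝ) / ‖u‖ ^ 2) • u := by
  have hsub : c • x - x = (c - 1) • x := by module
  rw [reflectInLine, hsub, real_inner_smul_left]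
  match_scalars <;> ring

theorem reflected_point_is_fixed_general (k : ℝ) (r p : EuclideanSpace ℝ (Fin 2))
    (hp : p ≠ 0)
    (E : ℝ) (hE : E = ‖p‖ ^ 2 / 2 - k / ‖r‖) (hEne : E ≠ 0)
    (A : EuclideanSpace ℝ (Fin 2))
    (hA : A = ‖p‖ ^ 2 • r - (inner ℝ r p : ℝ) • p - (k / ‖r‖) • r)
    (I' : EuclideanSpace ℝ (Fin 2)) (hI' : I' = (k / (-E) / ‖r‖) • r) :
    reflectInLine r p I' = E⁻¹ • A := by
  have hp2 : ‖p‖ ^ 2 = 2 * (E + k / ‖r‖) := by rw [hE]; ring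
  have hEs : E + k / ‖r‖ ≠ 0 := by
    have hp2_ne : ‖p‖ ^ 2 ≠ 0 := pow_ne_zero 2 (norm_ne_zero_iff.mpr hp)
    rw [hp2] at hp2_ne
    exact right_ne_zero_of_mul hp2_ne
  have hc : k / (-E) / ‖r‖ = -(k / ‖r‖) / E := by ring
  rw [hI', hA, hc, reflectInLine_smul_self, hp2]
  generalize k / ‖r‖ = s at hEs
  match_scalars
  · field_simp
    ring
  · field_simp
    ring

/-- The vHH construction: reflecting `I' = (k/(-E)) r/‖r‖` in the tangent line at the
point `r` (the line through `r` in direction `p`) gives the fixed point `I = A/E`,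
independently of the point of the orbit. -/
theorem reflected_point_is_fixed (k : ℝ) (r p : EuclideanSpace ℝ (Fin 2)) (hr : r ≠ 0)
    (hp : p ≠ 0)
    (ℓ : ℝ) (hℓdef : ℓ = r 0 * p 1 - r 1 * p 0) (hℓ : ℓ ≠ 0)
    (E : ℝ) (hE : E = ‖p‖ ^ 2 / 2 - k / ‖r‖) (hEne : E ≠ 0)
    (A : EuclideanSpace ℝ (Fin 2))
    (hA : A = ‖p‖ ^ 2 • r - (inner ℝ r p : ℝ) • p - (k / ‖r‖) • r)
    (I' : EuclideanSpace ℝ (Fin 2)) (hI' : I' = (k / (-E) / ‖r‖) • r) :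
    reflectInLine r p I' = E⁻¹ • A :=
  reflected_point_is_fixed_general k r p hp E hE hEne A hA I' hI'
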